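/- (WPD for rank-one elements.) Let X be a uniformly locally finite CAT(0) cube complex on which a group G acts metrically properly by isometries, and let h ∈ G act loxodromically on the contact graph 𝒞X (i.e., h has a quasigeodesic axis in 𝒞X). Then h is a WPD element for the G-action on 𝒞X: for all ε ≥ 1 and every hyperplane H, there exists N > 0 such that the set of g ∈ G with d_{𝒞X}(H, gH) < ε and d_{𝒞X}(h^N H, g h^N H) < ε is finite. -/

import Mathlib

/-- A combinatorial model of a CAT(0) cube complex: its `0`--skeleton is a
median graph, encoded by its wallspace (hyperplanes and halfspaces), with
the graph metric on the `1`--skeleton equal to the wall-counting metric. -/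
structure CubeComplex where
  /-- vertices (`0`--cubes) -/
  V : Type
  /-- hyperplanes (walls) -/
  Wall : Type
  /-- halfspace membership: `side w x` means `x` is on the positive side of `w` -/
  side : Wall → V → Prop
  /-- graph metric on the `1`--skeleton -/
  d : V → V → ℕ
  sepFinite : ∀ x y : V, {w : Wall | ¬ (side w x ↔ side w y)}.Finite
  d_eq : ∀ x y : V, d x y = {w : Wall | ¬ (side w x ↔ side w y)}.ncard
  /-- every hyperplane is dual to some `1`--cube -/
  wall_dual : ∀ w : Wall, ∃ x y : V, d x y = 1 ∧ ¬ (side w x ↔ side w y)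
  /-- the median operation of the underlying median graph -/
  median : V → V → V → V
  median_xy : ∀ x y z, d x (median x y z) + d (median x y z) y = d x y
  median_yz : ∀ x y z, d y (median x y z) + d (median x y z) z = d y z
  median_xz : ∀ x y z, d x (median x y z) + d (median x y z) z = d x z

namespace CubeComplex

variable (X : CubeComplex)

/-- the hyperplane `w` separates `x` from `y` -/
def Sep (w : X.Wall) (x y : X.V) : Prop := ¬ (X.side w x ↔ X.side w y)

/-- the hyperplane `w` separates `x` from the set `K` -/
def SepFrom (w : X.Wall) (x : X.V) (K : Set X.V) : Prop := ∀ k ∈ K, X.Sep w x k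

/-- `z` lies on a geodesic from `x` to `y` -/
def Btw (x z y : X.V) : Prop := X.d x z + X.d z y = X.d x y

/-- a convex (interval-closed, equivalently geodesically convex) subset -/
def IsConvex (K : Set X.V) : Prop := ∀ a ∈ K, ∀ b ∈ K, ∀ z, X.Btw a z b → z ∈ K

/-- the hyperplane `w` crosses the set `K` -/
def Crosses (w : X.Wall) (K : Set X.V) : Prop := ∃ a ∈ K, ∃ b ∈ K, X.Sep w a b

/-- two subcomplexes are parallel if exactly the same hyperplanes cross them -/
def ParallelSet (K K' : Set X.V) : Prop := ∀ w : X.Wall, X.Crosses w K ↔ X.Crosses w K'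

/-- the vertex set of the carrier `N(w)` of the hyperplane `w` -/
def carrier (w : X.Wall) : Set X.V := {x | ∃ y, X.d x y = 1 ∧ X.Sep w x y}

end CubeComplex

/-- A convex subcomplex of a CAT(0) cube complex, together with its gate
(closest-point projection) map, characterized by the property that a
hyperplane separates `x` from `gate x` iff it separates `x` from the
subcomplex. -/
structure ConvexSub (X : CubeComplex) where
  carrier : Set X.V
  nonempty : carrier.Nonempty
  convex : X.IsConvex carrier
  gate : X.V → X.V
  gate_mem : ∀ x, gate x ∈ carrier
  gate_idem : ∀ x ∈ carrier, gate x = x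
  gate_sep : ∀ x w, X.Sep w x (gate x) ↔ X.SepFrom w x carrier

/-- the contact graph of a CAT(0) cube complex: vertices are hyperplanes, two
hyperplanes are adjacent iff their carriers intersect (cross or osculate) -/
def CubeComplex.contactGraph (X : CubeComplex) : SimpleGraph X.Wall where
  Adj w w' := w ≠ w' ∧ (X.carrier w ∩ X.carrier w').Nonempty
  symm := ⟨by
    rintro w w' ⟨hne, x, hx1, hx2⟩
    exact ⟨Ne.symm hne, x, hx2, hx1⟩⟩
  loopless := ⟨fun w h => h.1 rfl⟩

/-- the defining predicate of the geometric realization of the flag complex on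
a graph `G`: finitely supported convex coefficients whose support is a clique -/
def FlagPred {ι : Type} (G : SimpleGraph ι) (f : ι → ℝ) : Prop :=
  (∀ i, 0 ≤ f i) ∧ (Function.support f).Finite ∧ (∑ᶠ i, f i) = 1 ∧
    (Function.support f).Pairwise G.Adj

/-- the geometric realization of the flag simplicial complex whose 1-skeleton
is the graph `G` (the contact complex, when `G` is the contact graph) -/
def FlagRealization {ι : Type} (G : SimpleGraph ι) : Type :=
  {f : ι → ℝ // FlagPred G f}

instance {ι : Type} (G : SimpleGraph ι) : TopologicalSpace (FlagRealization G) :=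
  inferInstanceAs (TopologicalSpace {f : ι → ℝ // FlagPred G f})

/-- an action of a group `G` on a CAT(0) cube complex by cubical
automorphisms: `G` acts on the `0`--cubes by isometries and compatibly
permutes the hyperplanes. -/
structure CubeAction (X : CubeComplex) (G : Type) [Group G] where
  act : G → X.V → X.V
  wact : G → X.Wall → X.Wall
  act_one : ∀ x, act 1 x = x
  act_mul : ∀ g h x, act (g * h) x = act g (act h x)
  wact_one : ∀ w, wact 1 w = w
  wact_mul : ∀ g h w, wact (g * h) w = wact g (wact h w)
  isom : ∀ g x y, X.d (act g x) (act g y) = X.d x y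
  side_compat : ∀ g w x, X.side (wact g w) (act g x) ↔ X.side w x

/-- `X` is uniformly locally finite -/
def CubeComplex.UniformlyLocallyFinite (X : CubeComplex) : Prop :=
  ∀ r : ℕ, ∃ N : ℕ, ∀ x : X.V,
    {y : X.V | X.d x y ≤ r}.Finite ∧ {y : X.V | X.d x y ≤ r}.ncard ≤ N

/-!
If `g` moves both `H` and a far-away hyperplane `H'` by less than `ε` in the contact graph,
then every hyperplane separating a point `p ∈ N(H)` from `g p` lies within `ε` of `H`, and every
hyperplane separating a point `q ∈ N(H')` from `g q` lies within `ε` of `H'`. Once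
`d(H, H') > 2ε` no hyperplane does both, so `d(p, g p) ≤ d(p, q) + d(g p, g q) = 2 d(p, q)`, and
metric properness leaves only finitely many such `g`. Loxodromicity of `h` supplies `H' = h^N H`.

Both facts about the contact graph that this needs, connectedness and that a hyperplane crossing
a carrier `N(U)` is adjacent or equal to `U`, come from the median of three vertices lying on the
majority side of every hyperplane.
-/

namespace SimpleGraph.Hom

variable {V W : Type*} {G : SimpleGraph V} {G' : SimpleGraph W}

theorem dist_le (f : G →g G') {u v : V} (huv : G.Reachable u v) :
    G'.dist (f u) (f v) ≤ G.dist u v := by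
  obtain ⟨P, hP⟩ := huv.exists_walk_length_eq_dist
  calc G'.dist (f u) (f v) ≤ (P.map f).length := SimpleGraph.dist_le _
    _ = G.dist u v := by rw [Walk.length_map, hP]

end SimpleGraph.Hom

namespace CubeComplex

variable {X : CubeComplex} {w v U W W' : X.Wall} {x y z p p' : X.V}

def sepSet (X : CubeComplex) (x y : X.V) : Set X.Wall := {w | X.Sep w x y}

@[simp]
theorem mem_sepSet : w ∈ X.sepSet x y ↔ X.Sep w x y := Iff.rfl

theorem sepSet_finite (x y : X.V) : (X.sepSet x y).Finite := X.sepFinite x y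

theorem d_eq_ncard_sepSet (x y : X.V) : X.d x y = (X.sepSet x y).ncard := X.d_eq x y

theorem sep_comm : X.Sep w x y ↔ X.Sep w y x := by
  unfold Sep; tauto

theorem sepSet_comm (x y : X.V) : X.sepSet x y = X.sepSet y x :=
  Set.ext fun _ => sep_comm

theorem d_pos_of_sep (h : X.Sep w x y) : 0 < X.d x y := by
  rw [d_eq_ncard_sepSet]
  exact Nat.pos_of_ne_zero (Set.ncard_ne_zero_of_mem h (sepSet_finite x y))

theorem d_le_add_of_forall_not_sep {x x' y y' : X.V}
    (h : ∀ w, X.Sep w x x' → X.Sep w y y' → False) :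
    X.d x x' ≤ X.d x y + X.d x' y' := by
  have hsub : X.sepSet x x' ⊆ X.sepSet x y ∪ X.sepSet x' y' := by
    intro w hw
    by_contra hw'
    simp only [Set.mem_union, mem_sepSet, Sep] at hw hw'
    exact h w hw (by unfold Sep; tauto)
  simp only [d_eq_ncard_sepSet]
  exact (Set.ncard_le_ncard hsub ((sepSet_finite _ _).union (sepSet_finite _ _))).trans
    (Set.ncard_union_le _ _)

theorem not_sep_of_btw (hz : X.Btw x z y) (w : X.Wall) : ¬ (X.Sep w x z ∧ X.Sep w z y) := by
  rintro ⟨hxz, hzy⟩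
  have hsub : X.sepSet x y ⊆ X.sepSet x z ∪ X.sepSet z y := by
    intro v hv
    simp only [Set.mem_union, mem_sepSet, Sep] at hv ⊢
    tauto
  have hunion := Set.ncard_union_add_ncard_inter _ _ (sepSet_finite x z) (sepSet_finite z y)
  have hle := Set.ncard_le_ncard hsub ((sepSet_finite x z).union (sepSet_finite z y))
  have hinter : (X.sepSet x z ∩ X.sepSet z y).ncard ≠ 0 :=
    Set.ncard_ne_zero_of_mem ⟨hxz, hzy⟩ ((sepSet_finite x z).inter_of_left _)
  unfold Btw at hz
  simp only [d_eq_ncard_sepSet] at hz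
  omega

theorem side_median (w : X.Wall) (a b c : X.V) :
    X.side w (X.median a b c) ↔
      X.side w a ∧ X.side w b ∨ X.side w b ∧ X.side w c ∨ X.side w a ∧ X.side w c := by
  have hab := not_sep_of_btw (X.median_xy a b c) w
  have hbc := not_sep_of_btw (X.median_yz a b c) w
  have hac := not_sep_of_btw (X.median_xz a b c) w
  unfold Sep at hab hbc hac
  tauto

theorem sepSet_median_median_right (x y u u' : X.V) :
    X.sepSet (X.median x y u) (X.median x y u') = X.sepSet x y ∩ X.sepSet u u' := by
  ext w
  simp only [Set.mem_inter_iff, mem_sepSet, Sep, side_median]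
  tauto

theorem sep_of_sepSet_eq_singleton (h : X.sepSet x y = {v}) : X.Sep v x y := by
  rw [← mem_sepSet, h]
  rfl

theorem eq_of_sepSet_eq_singleton (h : X.sepSet x y = {v}) (hw : X.Sep w x y) : w = v := by
  rwa [← mem_sepSet, h] at hw

theorem mem_carrier_iff : x ∈ X.carrier v ↔ ∃ y, X.sepSet x y = {v} := by
  refine exists_congr fun y => ?_
  rw [d_eq_ncard_sepSet, Set.ncard_eq_one]
  constructor
  · rintro ⟨⟨u, hu⟩, hv⟩
    rwa [eq_of_sepSet_eq_singleton hu hv]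
  · intro hv
    exact ⟨⟨v, hv⟩, sep_of_sepSet_eq_singleton hv⟩

theorem carrier_nonempty (v : X.Wall) : (X.carrier v).Nonempty :=
  let ⟨u, u', hd, hs⟩ := X.wall_dual v
  ⟨u, u', hd, hs⟩

theorem exists_sepSet_eq_singleton (v : X.Wall) : ∃ u u', X.sepSet u u' = {v} :=
  let ⟨u, hu⟩ := carrier_nonempty v
  ⟨u, mem_carrier_iff.mp hu⟩

theorem eq_or_adj_of_mem_carrier (hW : x ∈ X.carrier W) (hW' : x ∈ X.carrier W') :
    W = W' ∨ X.contactGraph.Adj W W' := by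
  by_cases h : W = W'
  · exact Or.inl h
  · exact Or.inr ⟨h, x, hW, hW'⟩

theorem exists_dual_edge_btw (hv : X.Sep v x y) :
    ∃ m m', X.Btw x m y ∧ X.Btw x m' y ∧ X.sepSet m m' = {v} ∧ ¬ X.Sep v x m := by
  obtain ⟨u, u', hu⟩ := exists_sepSet_eq_singleton v
  have hedge : X.sepSet (X.median x y u) (X.median x y u') = {v} := by
    rw [sepSet_median_median_right, hu, Set.inter_eq_right, Set.singleton_subset_iff]
    exact hv
  by_cases hxm : X.Sep v x (X.median x y u)
  · refine ⟨X.median x y u', X.median x y u, X.median_xy x y u', X.median_xy x y u,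
      sepSet_comm (X := X) _ _ ▸ hedge, ?_⟩
    have hmm' := sep_of_sepSet_eq_singleton hedge
    unfold Sep at hxm hmm' ⊢
    tauto
  · exact ⟨_, _, X.median_xy x y u, X.median_xy x y u', hedge, hxm⟩

theorem reachable_of_mem_carrier (hx : x ∈ X.carrier W) (hy : y ∈ X.carrier W') :
    X.contactGraph.Reachable W W' := by
  induction hn : X.d x y using Nat.strong_induction_on generalizing x y W W' with
  | _ n ih =>
  obtain hxy | ⟨v, hv : X.Sep v x y⟩ := (X.sepSet x y).eq_empty_or_nonempty
  · have hsame : ∀ z, X.sepSet x z = X.sepSet y z := fun z => by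
      ext w
      have hw : ¬ X.Sep w x y := fun h => (hxy ▸ (h : w ∈ X.sepSet x y) : w ∈ (∅ : Set _))
      simp only [mem_sepSet, Sep] at hw ⊢
      tauto
    obtain ⟨y', hy'⟩ := mem_carrier_iff.mp hy
    have hx' : x ∈ X.carrier W' := mem_carrier_iff.mpr ⟨y', hsame y' ▸ hy'⟩
    obtain rfl | hadj := eq_or_adj_of_mem_carrier hx hx'
    exacts [SimpleGraph.Reachable.refl _, hadj.reachable]
  -- an edge dual to `v` inside the interval `[x, y]` splits it into two strictly shorter pieces
  obtain ⟨m, m', hm, hm', hedge, hxm⟩ := exists_dual_edge_btw hv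
  have hmm' := sep_of_sepSet_eq_singleton hedge
  have hmy : X.Sep v m y := by unfold Sep at hv hxm ⊢; tauto
  have hxm' : X.Sep v x m' := by unfold Sep at hxm hmm' ⊢; tauto
  have hmv : m ∈ X.carrier v := mem_carrier_iff.mpr ⟨m', hedge⟩
  have hm'v : m' ∈ X.carrier v := mem_carrier_iff.mpr ⟨m, sepSet_comm (X := X) m m' ▸ hedge⟩
  have hdm := d_pos_of_sep hmy
  have hdm' := d_pos_of_sep hxm'
  unfold Btw at hm hm'
  exact (ih _ (by omega) hx hmv rfl).trans (ih _ (by omega) hm'v hy rfl)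

theorem contactGraph_connected [Nonempty X.Wall] : X.contactGraph.Connected where
  preconnected W W' := by
    obtain ⟨x, hx⟩ := carrier_nonempty W
    obtain ⟨y, hy⟩ := carrier_nonempty W'
    exact reachable_of_mem_carrier hx hy

theorem carrier_inter_nonempty_of_crosses (h : X.Crosses w (X.carrier U)) :
    (X.carrier w ∩ X.carrier U).Nonempty := by
  obtain ⟨a, ha, b, hb, hab⟩ := h
  by_cases hwU : w = U
  · exact ⟨a, hwU ▸ ha, ha⟩
  -- moving `a` across `U` if necessary, we may assume `U` does not separate `a` from `b`
  wlog hUab : ¬ X.Sep U a b generalizing a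
  · obtain ⟨a', ha'⟩ := mem_carrier_iff.mp ha
    have haa' := sep_of_sepSet_eq_singleton ha'
    have hw : ¬ X.Sep w a a' := fun h => hwU (eq_of_sepSet_eq_singleton ha' h)
    refine this a' (mem_carrier_iff.mpr ⟨a, sepSet_comm (X := X) a a' ▸ ha'⟩) ?_ ?_ <;>
      unfold Sep at * <;> tauto
  obtain ⟨a', ha'⟩ := mem_carrier_iff.mp ha
  obtain ⟨b', hb'⟩ := mem_carrier_iff.mp hb
  obtain ⟨u, u', hu⟩ := exists_sepSet_eq_singleton w
  refine ⟨X.median a b u, mem_carrier_iff.mpr ⟨X.median a b u', ?_⟩,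
    mem_carrier_iff.mpr ⟨X.median a' b' u, ?_⟩⟩
  · rw [sepSet_median_median_right, hu, Set.inter_eq_right, Set.singleton_subset_iff]
    exact hab
  · refine Set.eq_singleton_iff_unique_mem.mpr ⟨?_, fun v hv => ?_⟩
    · have haa' := sep_of_sepSet_eq_singleton ha'
      have hbb' := sep_of_sepSet_eq_singleton hb'
      simp only [mem_sepSet, Sep, side_median] at haa' hbb' hUab ⊢
      tauto
    · by_contra hvU
      have haa' : ¬ X.Sep v a a' := fun h => hvU (eq_of_sepSet_eq_singleton ha' h)
      have hbb' : ¬ X.Sep v b b' := fun h => hvU (eq_of_sepSet_eq_singleton hb' h)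
      simp only [mem_sepSet, Sep, side_median] at haa' hbb' hv
      tauto

theorem dist_le_one_of_crosses (h : X.Crosses w (X.carrier U)) : X.contactGraph.dist U w ≤ 1 := by
  obtain ⟨x, hxw, hxU⟩ := carrier_inter_nonempty_of_crosses h
  obtain rfl | hadj := eq_or_adj_of_mem_carrier hxU hxw
  · simp
  · exact (SimpleGraph.dist_eq_one_iff_adj.mpr hadj).le

theorem exists_mem_support_crosses_of_sep (P : X.contactGraph.Walk W W')
    (hp : p ∈ X.carrier W) (hp' : p' ∈ X.carrier W') (hw : X.Sep w p p') :
    ∃ U ∈ P.support, X.Crosses w (X.carrier U) := by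
  induction P generalizing p with
  | nil => exact ⟨_, SimpleGraph.Walk.start_mem_support _, p, hp, p', hp', hw⟩
  | cons hadj P ih =>
    obtain ⟨-, x, hxW, hxU⟩ := hadj
    by_cases hpx : X.Sep w p x
    · exact ⟨_, List.mem_cons_self, p, hp, x, hxW, hpx⟩
    · obtain ⟨U, hU, hcross⟩ := ih hxU hp' (by unfold Sep at hw hpx ⊢; tauto)
      exact ⟨U, List.mem_cons_of_mem _ hU, hcross⟩

theorem dist_le_dist_add_one_of_sep (hp : p ∈ X.carrier W) (hp' : p' ∈ X.carrier W')
    (hw : X.Sep w p p') : X.contactGraph.dist W w ≤ X.contactGraph.dist W W' + 1 := by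
  classical
  have hconn : X.contactGraph.Connected := have : Nonempty X.Wall := ⟨W⟩; contactGraph_connected
  obtain ⟨P, hP⟩ := hconn.exists_walk_length_eq_dist W W'
  obtain ⟨U, hU, hcross⟩ := exists_mem_support_crosses_of_sep P hp hp' hw
  calc X.contactGraph.dist W w ≤ X.contactGraph.dist W U + X.contactGraph.dist U w :=
        hconn.dist_triangle
    _ ≤ (P.takeUntil U hU).length + 1 :=
        add_le_add (SimpleGraph.dist_le _) (dist_le_one_of_crosses hcross)
    _ ≤ X.contactGraph.dist W W' + 1 := by
        have := P.length_takeUntil_le_length hU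
        omega

end CubeComplex

namespace CubeAction

open CubeComplex

variable {X : CubeComplex} {G : Type} [Group G] (A : CubeAction X G)

theorem sep_act_iff (g : G) (w : X.Wall) (x y : X.V) :
    X.Sep (A.wact g w) (A.act g x) (A.act g y) ↔ X.Sep w x y := by
  unfold CubeComplex.Sep
  rw [A.side_compat, A.side_compat]

theorem act_mem_carrier (g : G) {w : X.Wall} {x : X.V} (hx : x ∈ X.carrier w) :
    A.act g x ∈ X.carrier (A.wact g w) :=
  let ⟨y, hd, hs⟩ := hx
  ⟨A.act g y, by rw [A.isom, hd], (A.sep_act_iff g w x y).mpr hs⟩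

theorem wact_inv_wact (g : G) (w : X.Wall) : A.wact g⁻¹ (A.wact g w) = w := by
  rw [← A.wact_mul, inv_mul_cancel, A.wact_one]

def contactGraphHom (g : G) : X.contactGraph →g X.contactGraph where
  toFun := A.wact g
  map_rel' := fun ⟨hne, x, hx, hx'⟩ =>
    ⟨fun h => hne (by simpa only [wact_inv_wact] using congrArg (A.wact g⁻¹) h),
      A.act g x, A.act_mem_carrier g hx, A.act_mem_carrier g hx'⟩

@[simp]
theorem contactGraphHom_apply (g : G) (w : X.Wall) : A.contactGraphHom g w = A.wact g w := rfl

theorem dist_wact (g : G) (w w' : X.Wall) :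
    X.contactGraph.dist (A.wact g w) (A.wact g w') = X.contactGraph.dist w w' := by
  have : Nonempty X.Wall := ⟨w⟩
  have hconn : X.contactGraph.Connected := contactGraph_connected
  refine le_antisymm ((A.contactGraphHom g).dist_le (hconn.preconnected _ _)) ?_
  simpa only [contactGraphHom_apply, wact_inv_wact] using
    (A.contactGraphHom g⁻¹).dist_le (hconn.preconnected (A.wact g w) (A.wact g w'))

theorem dist_wact_self_le (g : G) (w H : X.Wall) :
    X.contactGraph.dist (A.wact g w) w ≤
      X.contactGraph.dist H (A.wact g H) + 2 * X.contactGraph.dist H w := by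
  have : Nonempty X.Wall := ⟨w⟩
  have hconn : X.contactGraph.Connected := contactGraph_connected
  have h₁ : X.contactGraph.dist (A.wact g w) w ≤
      X.contactGraph.dist (A.wact g w) (A.wact g H) + X.contactGraph.dist (A.wact g H) w :=
    hconn.dist_triangle
  have h₂ : X.contactGraph.dist (A.wact g H) w ≤
      X.contactGraph.dist (A.wact g H) H + X.contactGraph.dist H w :=
    hconn.dist_triangle
  have h₃ : X.contactGraph.dist (A.wact g w) (A.wact g H) = X.contactGraph.dist H w := by
    rw [A.dist_wact, SimpleGraph.dist_comm]
  have h₄ : X.contactGraph.dist (A.wact g H) H = X.contactGraph.dist H (A.wact g H) :=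
    SimpleGraph.dist_comm
  omega

theorem exists_dist_wact_pow_ge (h : G) {w₀ : X.Wall} {K C : ℝ} (hK : 0 < K)
    (hlow : ∀ n : ℕ, (n : ℝ) / K - C ≤ X.contactGraph.dist (A.wact (h ^ n) w₀) w₀)
    (H : X.Wall) (B : ℕ) :
    ∃ N : ℕ, 0 < N ∧ B ≤ X.contactGraph.dist H (A.wact (h ^ N) H) := by
  set r := X.contactGraph.dist H w₀
  obtain ⟨N, hN⟩ := exists_nat_gt (K * (C + 2 * r + B))
  refine ⟨N + 1, N.succ_pos, ?_⟩
  have hreal : (2 * r + B : ℝ) ≤ ((N + 1 : ℕ) : ℝ) / K - C := by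
    rw [le_sub_iff_add_le, le_div_iff₀ hK]
    push_cast
    linarith
  have hdisp : (X.contactGraph.dist (A.wact (h ^ (N + 1)) w₀) w₀ : ℝ) ≤
      X.contactGraph.dist H (A.wact (h ^ (N + 1)) H) + 2 * r := by
    exact_mod_cast A.dist_wact_self_le _ w₀ H
  exact_mod_cast (by linarith [hlow (N + 1)] :
    (B : ℝ) ≤ X.contactGraph.dist H (A.wact (h ^ (N + 1)) H))

theorem finite_setOf_dist_wact_lt
    (hproper : ∀ (x : X.V) (R : ℕ), {g : G | X.d x (A.act g x) ≤ R}.Finite)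
    {H H' : X.Wall} {ε : ℕ} (hfar : 2 * ε < X.contactGraph.dist H H') :
    {g : G | X.contactGraph.dist H (A.wact g H) < ε ∧
      X.contactGraph.dist H' (A.wact g H') < ε}.Finite := by
  have : Nonempty X.Wall := ⟨H⟩
  obtain ⟨p, hp⟩ := carrier_nonempty H
  obtain ⟨q, hq⟩ := carrier_nonempty H'
  refine (hproper p (2 * X.d p q)).subset fun g ⟨hgH, hgH'⟩ => ?_
  have hdisj : ∀ w, X.Sep w p (A.act g p) → X.Sep w q (A.act g q) → False := by
    intro w hp' hq'
    have h₁ := dist_le_dist_add_one_of_sep hp (A.act_mem_carrier g hp) hp'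
    have h₂ := dist_le_dist_add_one_of_sep hq (A.act_mem_carrier g hq) hq'
    have h₃ : X.contactGraph.dist H H' ≤ X.contactGraph.dist H w + X.contactGraph.dist w H' :=
      contactGraph_connected.dist_triangle
    have h₄ : X.contactGraph.dist w H' = X.contactGraph.dist H' w := SimpleGraph.dist_comm
    omega
  have := d_le_add_of_forall_not_sep hdisj
  rw [A.isom] at this
  show X.d p (A.act g p) ≤ 2 * X.d p q
  omega

end CubeAction

theorem wpd_of_loxodromic_general (X : CubeComplex) (G : Type) [Group G]
    (A : CubeAction X G)
    (hproper : ∀ (x : X.V) (R : ℕ), {g : G | X.d x (A.act g x) ≤ R}.Finite)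
    (h : G)
    (hlox : ∃ (w₀ : X.Wall) (K C : ℝ), 1 ≤ K ∧ 0 ≤ C ∧
      ∀ m n : ℤ,
        (|(m : ℝ) - n|) / K - C ≤
          (X.contactGraph.dist (A.wact (h ^ m) w₀) (A.wact (h ^ n) w₀) : ℝ) ∧
        (X.contactGraph.dist (A.wact (h ^ m) w₀) (A.wact (h ^ n) w₀) : ℝ) ≤
          K * |(m : ℝ) - n| + C) :
    ∀ ε : ℕ, 1 ≤ ε → ∀ H : X.Wall, ∃ N : ℕ, 0 < N ∧
      {g : G | X.contactGraph.dist H (A.wact g H) < ε ∧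
        X.contactGraph.dist (A.wact (h ^ N) H) (A.wact (g * h ^ N) H) < ε}.Finite := by
  obtain ⟨w₀, K, C, hK, -, hqg⟩ := hlox
  intro ε _ H
  have hlow : ∀ n : ℕ, (n : ℝ) / K - C ≤ X.contactGraph.dist (A.wact (h ^ n) w₀) w₀ :=
    fun n => by simpa [A.wact_one] using (hqg n 0).1
  obtain ⟨N, hN, hfar⟩ := A.exists_dist_wact_pow_ge h (by linarith) hlow H (2 * ε + 1)
  refine ⟨N, hN, ?_⟩
  simp only [A.wact_mul]
  exact A.finite_setOf_dist_wact_lt hproper hfar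

/-- **WPD for rank-one elements.** Let `X` be a uniformly
locally finite CAT(0) cube complex with a metrically proper `G`--action, and
let `h ∈ G` act loxodromically on the contact graph `𝒞X` (some hyperplane
orbit `⟨h⟩·w₀` is a quasigeodesic).  Then `h` is a WPD element for the
`G`--action on `𝒞X`. -/
theorem wpd_of_loxodromic (X : CubeComplex) (G : Type) [Group G]
    (A : CubeAction X G)
    (hULF : X.UniformlyLocallyFinite)
    (hproper : ∀ (x : X.V) (R : ℕ), {g : G | X.d x (A.act g x) ≤ R}.Finite)
    (h : G)
    (hlox : ∃ (w₀ : X.Wall) (K C : ℝ), 1 ≤ K ∧ 0 ≤ C ∧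
      ∀ m n : ℤ,
        (|(m : ℝ) - n|) / K - C ≤
          (X.contactGraph.dist (A.wact (h ^ m) w₀) (A.wact (h ^ n) w₀) : ℝ) ∧
        (X.contactGraph.dist (A.wact (h ^ m) w₀) (A.wact (h ^ n) w₀) : ℝ) ≤
          K * |(m : ℝ) - n| + C) :
    ∀ ε : ℕ, 1 ≤ ε → ∀ H : X.Wall, ∃ N : ℕ, 0 < N ∧
      {g : G | X.contactGraph.dist H (A.wact g H) < ε ∧
        X.contactGraph.dist (A.wact (h ^ N) H) (A.wact (g * h ^ N) H) < ε}.Finite :=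
  wpd_of_loxodromic_general X G A hproper h hlox
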